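/- There exists a nested distribution P of depth T = 3 on a finite probability space (a finite scenario tree) such that dl(P_{c(2)}, P) > 0 = dl(P, P). Consequently, making only one of the two nested distributions clairvoyant yields neither a lower bound nor an upper bound for the nested distance in general: with P̃ = P the inequality dl(P_{c(2)}, P̃) ≤ dl(P, P̃) fails, and with P̃ = P_{c(2)} the inequality dl(P, P̃) ≤ dl(P_{c(2)}, P̃) fails (since dl(P_{c(2)}, P_{c(2)}) = 0 < dl(P, P_{c(2)})). -/

import Mathlib

open MeasureTheory ProbabilityTheory

noncomputable section

abbrev EucSp (D : ℕ) := EuclideanSpace ℝ (Fin D)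

/-- Path space for `k` stages: the `ℓ¹`-product of Euclidean spaces `ℝ^D`, so that
`‖u - v‖ = ∑ t, ‖u t - v t‖` is the distance used for paths. -/
abbrev PathSpace (k D : ℕ) := PiLp 1 (fun _ : Fin k => EucSp D)

instance (k D : ℕ) : MeasurableSpace (PathSpace k D) :=
  MeasurableSpace.comap WithLp.ofLp MeasurableSpace.pi
instance (k D : ℕ) : BorelSpace (PathSpace k D) := inferInstance

/-- A nested distribution of depth `T` and dimension `D`: a probability space together with
a filtration `F` and an `ℝ^D`-valued scenario process `ξ` (relevant stages `1, …, T`)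
adapted to the filtration. -/
structure NestedDistribution (T D : ℕ) where
  Ω : Type
  m : MeasurableSpace Ω
  P : @MeasureTheory.Measure Ω m
  prob : @MeasureTheory.IsProbabilityMeasure Ω m P
  F : ℕ → MeasurableSpace Ω
  F_mono : Monotone F
  F_le : ∀ t, F t ≤ m
  ξ : ℕ → Ω → EucSp D
  adapted : ∀ t, @Measurable _ _ (F t) _ (ξ t)

attribute [instance] NestedDistribution.m

/-- The Kantorovich–Wasserstein distance (of order 1) between two Borel probability
measures on a normed space: `inf_π ∫ ‖x - y‖ dπ` over all couplings `π` of `μ` and `ν`. -/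
def kantorovich {E : Type*} [NormedAddCommGroup E] [MeasurableSpace E]
    (μ ν : Measure E) : ℝ :=
  sInf {r : ℝ | ∃ π : Measure (E × E), IsProbabilityMeasure π ∧
    π.map Prod.fst = μ ∧ π.map Prod.snd = ν ∧ r = ∫ p, ‖p.1 - p.2‖ ∂π}

/-- The (topological) support of a measure: points all of whose open neighbourhoods have
positive measure. -/
def measSupport {α : Type*} [TopologicalSpace α] [MeasurableSpace α] (μ : Measure α) :
    Set α :=
  {x | ∀ U : Set α, IsOpen U → x ∈ U → 0 < μ U}

namespace NestedDistribution

/-- A bicausal coupling of two nested distributions: a coupling `π` of the two probability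
measures such that for every stage `t = 1, …, T`, conditionally on `F t ⊗ F̃ t`, the
`π`-probability of `A × Ω̃` (for `A ∈ F T`) agrees with `P(A | F t)`, and symmetrically. -/
def IsBicausalCoupling {T D : ℕ} (N M : NestedDistribution T D)
    (π : Measure (N.Ω × M.Ω)) : Prop :=
  IsProbabilityMeasure π ∧ π.map Prod.fst = N.P ∧ π.map Prod.snd = M.P ∧
  (∀ t, 1 ≤ t → t ≤ T → ∀ A : Set N.Ω, MeasurableSet[N.F T] A →
    (π[((A ×ˢ (Set.univ : Set M.Ω)).indicator fun _ => (1 : ℝ)) | (N.F t).prod (M.F t)])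
      =ᵐ[π] fun p => (N.P[(A.indicator fun _ => (1 : ℝ)) | N.F t]) p.1) ∧
  (∀ t, 1 ≤ t → t ≤ T → ∀ B : Set M.Ω, MeasurableSet[M.F T] B →
    (π[(((Set.univ : Set N.Ω) ×ˢ B).indicator fun _ => (1 : ℝ)) | (N.F t).prod (M.F t)])
      =ᵐ[π] fun p => (M.P[(B.indicator fun _ => (1 : ℝ)) | M.F t]) p.2)

/-- The nested distance of order 1 between two nested distributions:
`inf_π ∫ ∑_{t=1}^T ‖ξ_t(u) - ξ̃_t(v)‖ dπ(u,v)` over all bicausal couplings `π`. -/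
def dist {T D : ℕ} (N M : NestedDistribution T D) : ℝ :=
  sInf {r : ℝ | ∃ π : Measure (N.Ω × M.Ω), IsBicausalCoupling N M π ∧
    r = ∫ p, ∑ t ∈ Finset.Icc 1 T, ‖N.ξ t p.1 - M.ξ t p.2‖ ∂π}

/-- Truncation of a nested distribution to stages `1, …, t`. -/
def truncate {T D : ℕ} (N : NestedDistribution T D) (t : ℕ) : NestedDistribution t D :=
  ⟨N.Ω, N.m, N.P, N.prob, N.F, N.F_mono, N.F_le, N.ξ, N.adapted⟩

/-- The `t`-clairvoyant version of a nested distribution: the filtration is unchanged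
before stage `t` and equals `F T` from stage `t` on. -/
def clairvoyant {T D : ℕ} (N : NestedDistribution T D) (t : ℕ) : NestedDistribution T D where
  Ω := N.Ω
  m := N.m
  P := N.P
  prob := N.prob
  F := fun s => if s < t then N.F s else N.F (max s T)
  F_mono := by
    intro a b hab
    dsimp only
    by_cases hb : b < t
    · have ha : a < t := lt_of_le_of_lt hab hb
      simpa [ha, hb] using N.F_mono hab
    · by_cases ha : a < t
      · simpa [ha, hb] using N.F_mono (le_trans hab (le_max_left b T))
      · simpa [ha, hb] using N.F_mono (max_le_max hab le_rfl)
  F_le := by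
    intro s; split <;> exact N.F_le _
  ξ := N.ξ
  adapted := by
    intro s
    show @Measurable _ _ (if s < t then N.F s else N.F (max s T)) _ (N.ξ s)
    by_cases h : s < t
    · rw [if_pos h]; exact N.adapted s
    · rw [if_neg h]; exact (N.adapted s).mono (N.F_mono (le_max_left s T)) le_rfl

/-- The history map up to stage `k`: `ω ↦ (ξ 1 ω, …, ξ k ω)`. -/
def hist {T D : ℕ} (N : NestedDistribution T D) (k : ℕ) : N.Ω → PathSpace k D :=
  fun ω => WithLp.toLp 1 (fun s : Fin k => N.ξ (s.1 + 1) ω)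

lemma measurable_hist {T D : ℕ} (N : NestedDistribution T D) (k : ℕ) :
    Measurable (N.hist k) :=
  (WithLp.measurable_toLp 1 _).comp
    (measurable_pi_lambda _ fun s => (N.adapted (s.1 + 1)).mono (N.F_le _) le_rfl)

/-- The law of the history `(ξ 1, …, ξ k)`. -/
def histLaw {T D : ℕ} (N : NestedDistribution T D) (k : ℕ) : Measure (PathSpace k D) :=
  N.P.map (N.hist k)

/-- The law of the whole scenario path `(ξ 1, …, ξ T)` on `ℝ^{D·T}`. -/
def pathLaw {T D : ℕ} (N : NestedDistribution T D) : Measure (PathSpace T D) :=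
  N.P.map (N.hist T)

end NestedDistribution

/-! ### Auxiliary material for the counterexample -/

namespace ClairvoyantCE

open Set MeasureTheory
open scoped ENNReal

section General

variable {α β : Type*}

lemma bot_prod_bot :
    (⊥ : MeasurableSpace α).prod (⊥ : MeasurableSpace β) = ⊥ := by
  simp [MeasurableSpace.prod, MeasurableSpace.comap_bot]

lemma prod_bot (m₁ : MeasurableSpace α) : m₁.prod (⊥ : MeasurableSpace β)
    = MeasurableSpace.comap Prod.fst m₁ := by
  simp [MeasurableSpace.prod, MeasurableSpace.comap_bot]

lemma bot_prod (m₂ : MeasurableSpace β) : (⊥ : MeasurableSpace α).prod m₂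
    = MeasurableSpace.comap Prod.snd m₂ := by
  simp [MeasurableSpace.prod, MeasurableSpace.comap_bot]

lemma prod_le_ambient {m₁ : MeasurableSpace α} {m₂ : MeasurableSpace β}
    [mα : MeasurableSpace α] [mβ : MeasurableSpace β]
    (h₁ : m₁ ≤ mα) (h₂ : m₂ ≤ mβ) :
    m₁.prod m₂ ≤ (@Prod.instMeasurableSpace α β mα mβ : MeasurableSpace (α × β)) :=
  sup_le ((MeasurableSpace.comap_mono h₁).trans measurable_fst.comap_le)
    ((MeasurableSpace.comap_mono h₂).trans measurable_snd.comap_le)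

/-- Bottom case for the first marginal: conditioning on the trivial σ-algebra. -/
lemma condexp_bot_fst [mα : MeasurableSpace α] [mβ : MeasurableSpace β]
    (π : Measure (α × β)) [IsProbabilityMeasure π]
    (P : Measure α) [IsProbabilityMeasure P] (hmap : π.map Prod.fst = P)
    {A : Set α} (hA : MeasurableSet A) :
    (π[((A ×ˢ (univ : Set β)).indicator fun _ => (1 : ℝ)) |
        (⊥ : MeasurableSpace α).prod (⊥ : MeasurableSpace β)])
      =ᵐ[π] fun p => (P[(A.indicator fun _ => (1 : ℝ)) | (⊥ : MeasurableSpace α)]) p.1 := by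
  rw [bot_prod_bot, condExp_bot, condExp_bot]
  have h1 : ∫ p, ((A ×ˢ (univ : Set β)).indicator fun _ => (1 : ℝ)) p ∂π = (P A).toReal := by
    rw [integral_indicator_const (1 : ℝ) (hA.prod MeasurableSet.univ), measureReal_def, Set.prod_univ,
      ← hmap, Measure.map_apply measurable_fst hA, smul_eq_mul, mul_one]
  have h2 : ∫ x, (A.indicator fun _ => (1 : ℝ)) x ∂P = (P A).toReal := by
    rw [integral_indicator_const (1 : ℝ) hA, measureReal_def, smul_eq_mul, mul_one]
  filter_upwards with p
  rw [h1, h2]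

/-- Bottom case for the second marginal. -/
lemma condexp_bot_snd [mα : MeasurableSpace α] [mβ : MeasurableSpace β]
    (π : Measure (α × β)) [IsProbabilityMeasure π]
    (Q : Measure β) [IsProbabilityMeasure Q] (hmap : π.map Prod.snd = Q)
    {B : Set β} (hB : MeasurableSet B) :
    (π[(((univ : Set α) ×ˢ B).indicator fun _ => (1 : ℝ)) |
        (⊥ : MeasurableSpace α).prod (⊥ : MeasurableSpace β)])
      =ᵐ[π] fun p => (Q[(B.indicator fun _ => (1 : ℝ)) | (⊥ : MeasurableSpace β)]) p.2 := by
  rw [bot_prod_bot, condExp_bot, condExp_bot]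
  have h1 : ∫ p, (((univ : Set α) ×ˢ B).indicator fun _ => (1 : ℝ)) p ∂π = (Q B).toReal := by
    rw [integral_indicator_const (1 : ℝ) (MeasurableSet.univ.prod hB), measureReal_def, Set.univ_prod,
      ← hmap, Measure.map_apply measurable_snd hB, smul_eq_mul, mul_one]
  have h2 : ∫ x, (B.indicator fun _ => (1 : ℝ)) x ∂Q = (Q B).toReal := by
    rw [integral_indicator_const (1 : ℝ) hB, measureReal_def, smul_eq_mul, mul_one]
  filter_upwards with p
  rw [h1, h2]

/-- Measurable case for the first marginal: the event is measurable for the conditioning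
σ-algebra. -/
lemma condexp_meas_fst {m₁ : MeasurableSpace α} {m₂ : MeasurableSpace β}
    [mα : MeasurableSpace α] [mβ : MeasurableSpace β]
    (π : Measure (α × β)) [IsFiniteMeasure π]
    (P : Measure α) [IsFiniteMeasure P]
    (h₁ : m₁ ≤ mα) (h₂ : m₂ ≤ mβ)
    {A : Set α} (hA : MeasurableSet[m₁] A) :
    (π[((A ×ˢ (univ : Set β)).indicator fun _ => (1 : ℝ)) | m₁.prod m₂])
      =ᵐ[π] fun p => (P[(A.indicator fun _ => (1 : ℝ)) | m₁]) p.1 := by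
  have hm : m₁.prod m₂ ≤ (@Prod.instMeasurableSpace α β mα mβ : MeasurableSpace (α × β)) :=
    prod_le_ambient h₁ h₂
  have hAm : MeasurableSet[m₁.prod m₂] (A ×ˢ (univ : Set β)) := by
    rw [Set.prod_univ]
    exact (le_sup_left : m₁.comap Prod.fst ≤ m₁.prod m₂) _ ⟨A, hA, rfl⟩
  rw [condExp_of_stronglyMeasurable hm
      ((@stronglyMeasurable_const _ _ (m₁.prod m₂) _ (1 : ℝ)).indicator hAm)
      ((integrable_const (1 : ℝ)).indicator (hm _ hAm)),
    condExp_of_stronglyMeasurable h₁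
      ((@stronglyMeasurable_const _ _ m₁ _ (1 : ℝ)).indicator hA)
      ((integrable_const (1 : ℝ)).indicator (h₁ _ hA))]
  filter_upwards with p
  by_cases hp : p.1 ∈ A
  · rw [Set.indicator_of_mem (by exact ⟨hp, trivial⟩), Set.indicator_of_mem hp]
  · rw [Set.indicator_of_notMem (fun hmem => hp hmem.1), Set.indicator_of_notMem hp]

/-- Measurable case for the second marginal. -/
lemma condexp_meas_snd {m₁ : MeasurableSpace α} {m₂ : MeasurableSpace β}
    [mα : MeasurableSpace α] [mβ : MeasurableSpace β]
    (π : Measure (α × β)) [IsFiniteMeasure π]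
    (Q : Measure β) [IsFiniteMeasure Q]
    (h₁ : m₁ ≤ mα) (h₂ : m₂ ≤ mβ)
    {B : Set β} (hB : MeasurableSet[m₂] B) :
    (π[(((univ : Set α) ×ˢ B).indicator fun _ => (1 : ℝ)) | m₁.prod m₂])
      =ᵐ[π] fun p => (Q[(B.indicator fun _ => (1 : ℝ)) | m₂]) p.2 := by
  have hm : m₁.prod m₂ ≤ (@Prod.instMeasurableSpace α β mα mβ : MeasurableSpace (α × β)) :=
    prod_le_ambient h₁ h₂
  have hBm : MeasurableSet[m₁.prod m₂] ((univ : Set α) ×ˢ B) := by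
    rw [Set.univ_prod]
    exact (le_sup_right : m₂.comap Prod.snd ≤ m₁.prod m₂) _ ⟨B, hB, rfl⟩
  rw [condExp_of_stronglyMeasurable hm
      ((@stronglyMeasurable_const _ _ (m₁.prod m₂) _ (1 : ℝ)).indicator hBm)
      ((integrable_const (1 : ℝ)).indicator (hm _ hBm)),
    condExp_of_stronglyMeasurable h₂
      ((@stronglyMeasurable_const _ _ m₂ _ (1 : ℝ)).indicator hB)
      ((integrable_const (1 : ℝ)).indicator (h₂ _ hB))]
  filter_upwards with p
  by_cases hp : p.2 ∈ B
  · rw [Set.indicator_of_mem (by exact ⟨trivial, hp⟩), Set.indicator_of_mem hp]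
  · rw [Set.indicator_of_notMem (fun hmem => hp hmem.2), Set.indicator_of_notMem hp]

/-- Independence case for a product measure: a second-marginal event conditioned on a
σ-algebra that only sees the first coordinate. -/
lemma condexp_indep_snd [mα : MeasurableSpace α] [mβ : MeasurableSpace β]
    (P : Measure α) (Q : Measure β)
    [IsProbabilityMeasure P] [IsProbabilityMeasure Q]
    {B : Set β} (hB : MeasurableSet B) :
    ((P.prod Q)[(((univ : Set α) ×ˢ B).indicator fun _ => (1 : ℝ)) |
        mα.prod (⊥ : MeasurableSpace β)])
      =ᵐ[P.prod Q] fun _ => (Q B).toReal := by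
  rw [prod_bot]
  have hm : MeasurableSpace.comap Prod.fst mα
      ≤ (@Prod.instMeasurableSpace α β mα mβ : MeasurableSpace (α × β)) := by
    rw [← prod_bot]
    exact prod_le_ambient le_rfl bot_le
  refine (ae_eq_condExp_of_forall_setIntegral_eq hm
    ((integrable_const (1 : ℝ)).indicator (MeasurableSet.univ.prod hB))
    (fun s _ _ => (integrable_const _).integrableOn)
    (fun s hs _ => ?_)
    ((@stronglyMeasurable_const _ _ _ _ _).aestronglyMeasurable)).symm
  obtain ⟨S, -, rfl⟩ := hs
  rw [setIntegral_const, setIntegral_indicator (MeasurableSet.univ.prod hB)]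
  have hset : (Prod.fst ⁻¹' S : Set (α × β)) ∩ (univ : Set α) ×ˢ B = S ×ˢ B := by
    rw [← Set.prod_univ, Set.prod_inter_prod, Set.inter_univ, Set.univ_inter]
  rw [hset, setIntegral_const]
  simp only [measureReal_def]
  rw [← Set.prod_univ, Measure.prod_prod, Measure.prod_prod]
  simp [ENNReal.toReal_mul, mul_comm]

/-- Independence case for a product measure, mirrored. -/
lemma condexp_indep_fst [mα : MeasurableSpace α] [mβ : MeasurableSpace β]
    (P : Measure α) (Q : Measure β)
    [IsProbabilityMeasure P] [IsProbabilityMeasure Q]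
    {A : Set α} (hA : MeasurableSet A) :
    ((P.prod Q)[((A ×ˢ (univ : Set β)).indicator fun _ => (1 : ℝ)) |
        (⊥ : MeasurableSpace α).prod mβ])
      =ᵐ[P.prod Q] fun _ => (P A).toReal := by
  rw [bot_prod]
  have hm : MeasurableSpace.comap Prod.snd mβ
      ≤ (@Prod.instMeasurableSpace α β mα mβ : MeasurableSpace (α × β)) := by
    rw [← bot_prod]
    exact prod_le_ambient bot_le le_rfl
  refine (ae_eq_condExp_of_forall_setIntegral_eq hm
    ((integrable_const (1 : ℝ)).indicator (hA.prod MeasurableSet.univ))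
    (fun s _ _ => (integrable_const _).integrableOn)
    (fun s hs _ => ?_)
    ((@stronglyMeasurable_const _ _ _ _ _).aestronglyMeasurable)).symm
  obtain ⟨S, -, rfl⟩ := hs
  rw [setIntegral_const, setIntegral_indicator (hA.prod MeasurableSet.univ)]
  have hset : (Prod.snd ⁻¹' S : Set (α × β)) ∩ A ×ˢ (univ : Set β) = A ×ˢ S := by
    rw [← Set.univ_prod, Set.prod_inter_prod, Set.inter_univ, Set.univ_inter]
  rw [hset, setIntegral_const]
  simp only [measureReal_def]
  rw [← Set.univ_prod, Measure.prod_prod, Measure.prod_prod]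
  simp [ENNReal.toReal_mul, mul_comm]

end General

section Construction

/-- The uniform probability measure on `Bool`. -/
def P₀ : Measure Bool := (2⁻¹ : ℝ≥0∞) • (Measure.dirac true + Measure.dirac false)

lemma P₀_apply (s : Set Bool) :
    P₀ s = 2⁻¹ * (s.indicator 1 true + s.indicator 1 false) := by
  simp [P₀, Measure.dirac_apply, mul_add]

instance : IsProbabilityMeasure P₀ := by
  constructor
  rw [P₀_apply]
  simp only [Set.indicator_univ, Pi.one_apply]
  rw [one_add_one_eq_two, ENNReal.inv_mul_cancel (by norm_num) (by norm_num)]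

lemma P₀_true : P₀ {true} = 2⁻¹ := by rw [P₀_apply]; simp

lemma P₀_singleton (a : Bool) : P₀ {a} = 2⁻¹ := by
  cases a <;> (rw [P₀_apply]; simp)

lemma P₀_singleton_toReal (a : Bool) : (P₀ {a}).toReal = 1 / 2 := by
  rw [P₀_singleton]
  norm_num [ENNReal.toReal_inv]

lemma P₀_true_toReal : (P₀ {true}).toReal = 1 / 2 := P₀_singleton_toReal true

/-- The nonzero stage-3 scenario value. -/
def e₁ : EucSp 1 := EuclideanSpace.single 0 1

lemma norm_e₁ : ‖e₁‖ = 1 := by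
  rw [e₁, EuclideanSpace.norm_single]
  exact norm_one

/-- The scenario process: `0` at stages `1, 2`; at stage `3` it is `e₁` on `true`,
`0` on `false`. -/
def ξ₀ : ℕ → Bool → EucSp 1 := fun t ω => if t = 3 ∧ ω = true then e₁ else 0

/-- The filtration: trivial until stage `2`, full at stage `3`. -/
def F₀ : ℕ → MeasurableSpace Bool := fun t => if t ≤ 2 then ⊥ else ⊤

/-- The counterexample nested distribution. -/
def N₀ : NestedDistribution 3 1 where
  Ω := Bool
  m := Bool.instMeasurableSpace
  P := P₀
  prob := inferInstance
  F := F₀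
  F_mono := by
    intro a b hab
    by_cases hb : b ≤ 2
    · have ha : a ≤ 2 := hab.trans hb
      simp [F₀, ha, hb]
    · simp only [F₀, if_neg hb]
      exact le_top
  F_le := fun t => le_top
  ξ := ξ₀
  adapted := by
    intro t
    by_cases h : t ≤ 2
    · have hz : ξ₀ t = fun _ => 0 := by
        funext ω
        simp only [ξ₀]
        rw [if_neg]
        rintro ⟨h3, -⟩
        omega
      rw [hz]
      exact measurable_const
    · exact measurable_from_top.mono
        (by simp [F₀, h] : (⊤ : MeasurableSpace Bool) ≤ F₀ t) le_rfl

/-- Off-diagonal set in `Bool × Bool`. -/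
def offD : Set (Bool × Bool) := {(true, false), (false, true)}

lemma offD_meas : MeasurableSet offD :=
  (measurableSet_singleton ((false, true) : Bool × Bool)).insert (true, false)

lemma cost_fun_eq :
    (fun p : Bool × Bool => ∑ t ∈ Finset.Icc 1 3, ‖ξ₀ t p.1 - ξ₀ t p.2‖)
      = offD.indicator (fun _ => (1 : ℝ)) := by
  funext p
  obtain ⟨a, b⟩ := p
  have hIcc : Finset.Icc 1 3 = ({1, 2, 3} : Finset ℕ) := rfl
  rw [hIcc, Finset.sum_insert (by decide), Finset.sum_insert (by decide),
    Finset.sum_singleton]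
  cases a <;> cases b <;>
    simp [ξ₀, offD, Set.indicator_apply, norm_e₁]

lemma cost_eq (π : Measure (Bool × Bool)) :
    ∫ p, ∑ t ∈ Finset.Icc 1 3, ‖ξ₀ t p.1 - ξ₀ t p.2‖ ∂π = (π offD).toReal := by
  rw [cost_fun_eq, integral_indicator_const (1 : ℝ) offD_meas, measureReal_def, smul_eq_mul, mul_one]

/-- The diagonal coupling. -/
def πd : Measure (Bool × Bool) := P₀.map (fun b => (b, b))

lemma meas_diag : Measurable (fun b : Bool => (b, b)) := measurable_from_top

instance : IsProbabilityMeasure πd := Measure.isProbabilityMeasure_map meas_diag.aemeasurable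

lemma πd_fst : πd.map Prod.fst = P₀ := by
  rw [πd, Measure.map_map measurable_fst meas_diag]
  exact Measure.map_id

lemma πd_snd : πd.map Prod.snd = P₀ := by
  rw [πd, Measure.map_map measurable_snd meas_diag]
  exact Measure.map_id

lemma πd_offD : πd offD = 0 := by
  rw [πd, Measure.map_apply meas_diag offD_meas]
  have h : (fun b : Bool => (b, b)) ⁻¹' offD = ∅ := by
    ext b
    cases b <;> simp [offD]
  rw [h]
  exact measure_empty

/-- The product (independent) coupling. -/
def πp : Measure (Bool × Bool) := P₀.prod P₀

instance : IsProbabilityMeasure πp := by rw [πp]; infer_instance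

lemma πp_fst : πp.map Prod.fst = P₀ := Measure.fst_prod

lemma πp_snd : πp.map Prod.snd = P₀ := Measure.snd_prod

/-- Any coupling with uniform first marginal whose conditional law of the second-stage-3
value given the first coordinate is uniform puts mass exactly `1/2` off the diagonal. -/
lemma mass_half_fst (π : Measure (Bool × Bool)) [IsProbabilityMeasure π]
    (hfst : π.map Prod.fst = P₀)
    (h : (π[(((univ : Set Bool) ×ˢ ({true} : Set Bool)).indicator fun _ => (1 : ℝ)) |
        (⊤ : MeasurableSpace Bool).prod (⊥ : MeasurableSpace Bool)])
      =ᵐ[π] fun _ => (1 / 2 : ℝ)) :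
    (π offD).toReal = 1 / 2 := by
  have hm : (⊤ : MeasurableSpace Bool).prod (⊥ : MeasurableSpace Bool)
      ≤ (Prod.instMeasurableSpace : MeasurableSpace (Bool × Bool)) :=
    prod_le_ambient (le_of_eq rfl) bot_le
  have key : ∀ a : Bool, (π {(a, true)}).toReal = 1 / 4 ∧ (π {(a, false)}).toReal = 1 / 4 := by
    intro a
    have hsm : MeasurableSet[(⊤ : MeasurableSpace Bool).prod (⊥ : MeasurableSpace Bool)]
        ((Prod.fst ⁻¹' {a}) : Set (Bool × Bool)) := by
      rw [prod_bot]
      exact ⟨{a}, MeasurableSpace.measurableSet_top, rfl⟩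
    have hsm' : MeasurableSet ((Prod.fst ⁻¹' {a}) : Set (Bool × Bool)) := hm _ hsm
    have hint : Integrable
        (((univ : Set Bool) ×ˢ ({true} : Set Bool)).indicator fun _ => (1 : ℝ)) π :=
      Integrable.of_finite
    have h1 := setIntegral_condExp hm hint hsm
    have h2 : ∫ p in Prod.fst ⁻¹' {a},
        (π[(((univ : Set Bool) ×ˢ ({true} : Set Bool)).indicator fun _ => (1 : ℝ)) |
          (⊤ : MeasurableSpace Bool).prod (⊥ : MeasurableSpace Bool)]) p ∂π
        = ∫ _ in Prod.fst ⁻¹' {a}, (1 / 2 : ℝ) ∂π :=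
      setIntegral_congr_ae hsm' (h.mono fun p hp _ => hp)
    have hμa : π (Prod.fst ⁻¹' {a}) = 2⁻¹ := by
      rw [← Measure.map_apply measurable_fst (measurableSet_singleton a), hfst, P₀_singleton]
    have hS : (Prod.fst ⁻¹' {a} : Set (Bool × Bool)) ∩
        (univ : Set Bool) ×ˢ ({true} : Set Bool) = {(a, true)} := by
      ext ⟨x, y⟩
      simp [and_comm, Prod.ext_iff]
    have htrue : (π {(a, true)}).toReal = 1 / 4 := by
      have h3 := h1.symm.trans h2
      rw [setIntegral_indicator (MeasurableSet.univ.prod (measurableSet_singleton true)),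
        hS, setIntegral_const, setIntegral_const, measureReal_def, measureReal_def, hμa, smul_eq_mul, mul_one,
        smul_eq_mul] at h3
      rw [h3]
      norm_num [ENNReal.toReal_inv]
    refine ⟨htrue, ?_⟩
    have hu : (Prod.fst ⁻¹' {a} : Set (Bool × Bool))
        = {(a, true)} ∪ {(a, false)} := by
      ext ⟨x, y⟩
      cases y <;> simp [Prod.ext_iff]
    have hsplit : (π (Prod.fst ⁻¹' {a})).toReal
        = (π {(a, true)}).toReal + (π {(a, false)}).toReal := by
      rw [hu, measure_union (by simp) (measurableSet_singleton _),
        ENNReal.toReal_add (measure_ne_top _ _) (measure_ne_top _ _)]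
    rw [hμa] at hsplit
    have h14 : ((2 : ℝ≥0∞)⁻¹).toReal = 1 / 2 := by
      norm_num [ENNReal.toReal_inv]
    rw [h14, htrue] at hsplit
    linarith
  have hoff : offD = ({(true, false)} : Set (Bool × Bool)) ∪ {(false, true)} := by
    rw [offD, Set.insert_eq]
  rw [hoff, measure_union (by simp) (measurableSet_singleton _),
    ENNReal.toReal_add (measure_ne_top _ _) (measure_ne_top _ _),
    (key true).2, (key false).1]
  norm_num

/-- Mirror version: conditioning only sees the second coordinate. -/
lemma mass_half_snd (π : Measure (Bool × Bool)) [IsProbabilityMeasure π]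
    (hsnd : π.map Prod.snd = P₀)
    (h : (π[((({true} : Set Bool) ×ˢ (univ : Set Bool)).indicator fun _ => (1 : ℝ)) |
        (⊥ : MeasurableSpace Bool).prod (⊤ : MeasurableSpace Bool)])
      =ᵐ[π] fun _ => (1 / 2 : ℝ)) :
    (π offD).toReal = 1 / 2 := by
  have hm : (⊥ : MeasurableSpace Bool).prod (⊤ : MeasurableSpace Bool)
      ≤ (Prod.instMeasurableSpace : MeasurableSpace (Bool × Bool)) :=
    prod_le_ambient bot_le (le_of_eq rfl)
  have key : ∀ b : Bool, (π {(true, b)}).toReal = 1 / 4 ∧ (π {(false, b)}).toReal = 1 / 4 := by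
    intro b
    have hsm : MeasurableSet[(⊥ : MeasurableSpace Bool).prod (⊤ : MeasurableSpace Bool)]
        ((Prod.snd ⁻¹' {b}) : Set (Bool × Bool)) := by
      rw [bot_prod]
      exact ⟨{b}, MeasurableSpace.measurableSet_top, rfl⟩
    have hsm' : MeasurableSet ((Prod.snd ⁻¹' {b}) : Set (Bool × Bool)) := hm _ hsm
    have hint : Integrable
        ((({true} : Set Bool) ×ˢ (univ : Set Bool)).indicator fun _ => (1 : ℝ)) π :=
      Integrable.of_finite
    have h1 := setIntegral_condExp hm hint hsm
    have h2 : ∫ p in Prod.snd ⁻¹' {b},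
        (π[((({true} : Set Bool) ×ˢ (univ : Set Bool)).indicator fun _ => (1 : ℝ)) |
          (⊥ : MeasurableSpace Bool).prod (⊤ : MeasurableSpace Bool)]) p ∂π
        = ∫ _ in Prod.snd ⁻¹' {b}, (1 / 2 : ℝ) ∂π :=
      setIntegral_congr_ae hsm' (h.mono fun p hp _ => hp)
    have hμb : π (Prod.snd ⁻¹' {b}) = 2⁻¹ := by
      rw [← Measure.map_apply measurable_snd (measurableSet_singleton b), hsnd, P₀_singleton]
    have hS : (Prod.snd ⁻¹' {b} : Set (Bool × Bool)) ∩
        ({true} : Set Bool) ×ˢ (univ : Set Bool) = {(true, b)} := by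
      ext ⟨x, y⟩
      simp [and_comm, Prod.ext_iff]
    have htrue : (π {(true, b)}).toReal = 1 / 4 := by
      have h3 := h1.symm.trans h2
      rw [setIntegral_indicator ((measurableSet_singleton true).prod MeasurableSet.univ),
        hS, setIntegral_const, setIntegral_const, measureReal_def, measureReal_def, hμb, smul_eq_mul, mul_one,
        smul_eq_mul] at h3
      rw [h3]
      norm_num [ENNReal.toReal_inv]
    refine ⟨htrue, ?_⟩
    have hu : (Prod.snd ⁻¹' {b} : Set (Bool × Bool))
        = {(true, b)} ∪ {(false, b)} := by
      ext ⟨x, y⟩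
      cases x <;> simp [Prod.ext_iff]
    have hsplit : (π (Prod.snd ⁻¹' {b})).toReal
        = (π {(true, b)}).toReal + (π {(false, b)}).toReal := by
      rw [hu, measure_union (by simp) (measurableSet_singleton _),
        ENNReal.toReal_add (measure_ne_top _ _) (measure_ne_top _ _)]
    rw [hμb] at hsplit
    have h14 : ((2 : ℝ≥0∞)⁻¹).toReal = 1 / 2 := by
      norm_num [ENNReal.toReal_inv]
    rw [h14, htrue] at hsplit
    linarith
  have hoff : offD = ({(true, false)} : Set (Bool × Bool)) ∪ {(false, true)} := by
    rw [offD, Set.insert_eq]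
  rw [hoff, measure_union (by simp) (measurableSet_singleton _),
    ENNReal.toReal_add (measure_ne_top _ _) (measure_ne_top _ _),
    (key false).1, (key true).2]
  norm_num

lemma indep_cond_snd (B : Set Bool) (hB : MeasurableSet B) :
    (πp[(((univ : Set Bool) ×ˢ B).indicator fun _ => (1 : ℝ)) |
        (⊤ : MeasurableSpace Bool).prod (⊥ : MeasurableSpace Bool)]) =ᵐ[πp]
      fun p => (P₀[(B.indicator fun _ => (1 : ℝ)) | (⊥ : MeasurableSpace Bool)]) p.2 := by
  rw [condExp_bot]
  have hconst : (fun p : Bool × Bool =>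
      (fun _ : Bool => ∫ x, B.indicator (fun _ => (1 : ℝ)) x ∂P₀) p.2)
      = fun _ => (P₀ B).toReal := by
    funext p
    show ∫ x, B.indicator (fun _ => (1 : ℝ)) x ∂P₀ = (P₀ B).toReal
    rw [integral_indicator_const (1 : ℝ) hB, measureReal_def, smul_eq_mul, mul_one]
  rw [hconst]
  exact condexp_indep_snd P₀ P₀ hB

lemma indep_cond_fst (A : Set Bool) (hA : MeasurableSet A) :
    (πp[((A ×ˢ (univ : Set Bool)).indicator fun _ => (1 : ℝ)) |
        (⊥ : MeasurableSpace Bool).prod (⊤ : MeasurableSpace Bool)]) =ᵐ[πp]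
      fun p => (P₀[(A.indicator fun _ => (1 : ℝ)) | (⊥ : MeasurableSpace Bool)]) p.1 := by
  rw [condExp_bot]
  have hconst : (fun p : Bool × Bool =>
      (fun _ : Bool => ∫ x, A.indicator (fun _ => (1 : ℝ)) x ∂P₀) p.1)
      = fun _ => (P₀ A).toReal := by
    funext p
    show ∫ x, A.indicator (fun _ => (1 : ℝ)) x ∂P₀ = (P₀ A).toReal
    rw [integral_indicator_const (1 : ℝ) hA, measureReal_def, smul_eq_mul, mul_one]
  rw [hconst]
  exact condexp_indep_fst P₀ P₀ hA

/-! ### The four couplings are bicausal -/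

lemma bicausal_diag_N : N₀.IsBicausalCoupling N₀ πd := by
  refine ⟨inferInstanceAs (IsProbabilityMeasure πd), πd_fst, πd_snd, ?_, ?_⟩
  · intro t ht1 ht3 A hA
    interval_cases t
    · exact condexp_bot_fst πd P₀ πd_fst hA
    · exact condexp_bot_fst πd P₀ πd_fst hA
    · exact condexp_meas_fst πd P₀ (N₀.F_le 3) (N₀.F_le 3) hA
  · intro t ht1 ht3 B hB
    interval_cases t
    · exact condexp_bot_snd πd P₀ πd_snd hB
    · exact condexp_bot_snd πd P₀ πd_snd hB
    · exact condexp_meas_snd πd P₀ (N₀.F_le 3) (N₀.F_le 3) hB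

lemma bicausal_diag_C :
    (N₀.clairvoyant 2).IsBicausalCoupling (N₀.clairvoyant 2) πd := by
  refine ⟨inferInstanceAs (IsProbabilityMeasure πd), πd_fst, πd_snd, ?_, ?_⟩
  · intro t ht1 ht3 A hA
    interval_cases t
    · exact condexp_bot_fst πd P₀ πd_fst hA
    · exact condexp_meas_fst πd P₀ ((N₀.clairvoyant 2).F_le 2)
        ((N₀.clairvoyant 2).F_le 2) hA
    · exact condexp_meas_fst πd P₀ ((N₀.clairvoyant 2).F_le 3)
        ((N₀.clairvoyant 2).F_le 3) hA
  · intro t ht1 ht3 B hB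
    interval_cases t
    · exact condexp_bot_snd πd P₀ πd_snd hB
    · exact condexp_meas_snd πd P₀ ((N₀.clairvoyant 2).F_le 2)
        ((N₀.clairvoyant 2).F_le 2) hB
    · exact condexp_meas_snd πd P₀ ((N₀.clairvoyant 2).F_le 3)
        ((N₀.clairvoyant 2).F_le 3) hB

lemma bicausal_prod_CN : (N₀.clairvoyant 2).IsBicausalCoupling N₀ πp := by
  refine ⟨inferInstanceAs (IsProbabilityMeasure πp), πp_fst, πp_snd, ?_, ?_⟩
  · intro t ht1 ht3 A hA
    interval_cases t
    · exact condexp_bot_fst πp P₀ πp_fst hA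
    · exact condexp_meas_fst πp P₀ ((N₀.clairvoyant 2).F_le 2) (N₀.F_le 2) hA
    · exact condexp_meas_fst πp P₀ ((N₀.clairvoyant 2).F_le 3) (N₀.F_le 3) hA
  · intro t ht1 ht3 B hB
    interval_cases t
    · exact condexp_bot_snd πp P₀ πp_snd hB
    · exact indep_cond_snd B hB
    · exact condexp_meas_snd πp P₀ ((N₀.clairvoyant 2).F_le 3) (N₀.F_le 3) hB

lemma bicausal_prod_NC : N₀.IsBicausalCoupling (N₀.clairvoyant 2) πp := by
  refine ⟨inferInstanceAs (IsProbabilityMeasure πp), πp_fst, πp_snd, ?_, ?_⟩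
  · intro t ht1 ht3 A hA
    interval_cases t
    · exact condexp_bot_fst πp P₀ πp_fst hA
    · exact indep_cond_fst A hA
    · exact condexp_meas_fst πp P₀ (N₀.F_le 3) ((N₀.clairvoyant 2).F_le 3) hA
  · intro t ht1 ht3 B hB
    interval_cases t
    · exact condexp_bot_snd πp P₀ πp_snd hB
    · exact condexp_meas_snd πp P₀ (N₀.F_le 2) ((N₀.clairvoyant 2).F_le 2) hB
    · exact condexp_meas_snd πp P₀ (N₀.F_le 3) ((N₀.clairvoyant 2).F_le 3) hB

/-! ### The four nested distances -/

lemma dist_NN : NestedDistribution.dist N₀ N₀ = 0 := by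
  have hcost : (0 : ℝ) = ∫ p, ∑ t ∈ Finset.Icc 1 3, ‖N₀.ξ t p.1 - N₀.ξ t p.2‖ ∂πd := by
    show (0 : ℝ) = ∫ p, ∑ t ∈ Finset.Icc 1 3, ‖ξ₀ t p.1 - ξ₀ t p.2‖ ∂πd
    rw [cost_eq πd, πd_offD, ENNReal.toReal_zero]
  unfold NestedDistribution.dist
  apply le_antisymm
  · apply csInf_le
    · refine ⟨0, ?_⟩
      rintro r ⟨π, -, rfl⟩
      exact integral_nonneg fun p => Finset.sum_nonneg fun t _ => norm_nonneg _
    · exact ⟨πd, bicausal_diag_N, hcost⟩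
  · refine le_csInf ?_ ?_
    · exact ⟨0, πd, bicausal_diag_N, hcost⟩
    rintro r ⟨π, -, rfl⟩
    exact integral_nonneg fun p => Finset.sum_nonneg fun t _ => norm_nonneg _

lemma dist_CC :
    NestedDistribution.dist (N₀.clairvoyant 2) (N₀.clairvoyant 2) = 0 := by
  have hcost : (0 : ℝ) = ∫ p, ∑ t ∈ Finset.Icc 1 3,
      ‖(N₀.clairvoyant 2).ξ t p.1 - (N₀.clairvoyant 2).ξ t p.2‖ ∂πd := by
    show (0 : ℝ) = ∫ p, ∑ t ∈ Finset.Icc 1 3, ‖ξ₀ t p.1 - ξ₀ t p.2‖ ∂πd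
    rw [cost_eq πd, πd_offD, ENNReal.toReal_zero]
  unfold NestedDistribution.dist
  apply le_antisymm
  · apply csInf_le
    · refine ⟨0, ?_⟩
      rintro r ⟨π, -, rfl⟩
      exact integral_nonneg fun p => Finset.sum_nonneg fun t _ => norm_nonneg _
    · exact ⟨πd, bicausal_diag_C, hcost⟩
  · refine le_csInf ?_ ?_
    · exact ⟨0, πd, bicausal_diag_C, hcost⟩
    rintro r ⟨π, -, rfl⟩
    exact integral_nonneg fun p => Finset.sum_nonneg fun t _ => norm_nonneg _

lemma dist_CN_pos : 0 < NestedDistribution.dist (N₀.clairvoyant 2) N₀ := by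
  unfold NestedDistribution.dist
  refine lt_of_lt_of_le (show (0 : ℝ) < 1 / 2 by norm_num) (le_csInf ?_ ?_)
  · exact ⟨_, πp, bicausal_prod_CN, rfl⟩
  rintro r ⟨π, ⟨hprob, hfst, hsnd, hc1, hc2⟩, rfl⟩
  haveI : IsProbabilityMeasure π := hprob
  have h := hc2 2 (by norm_num) (by norm_num) {true} MeasurableSpace.measurableSet_top
  have hrhs : (fun p : Bool × Bool =>
      (P₀[(({true} : Set Bool).indicator fun _ => (1 : ℝ)) | (⊥ : MeasurableSpace Bool)]) p.2)
      = fun _ => (1 / 2 : ℝ) := by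
    rw [condExp_bot]
    funext p
    rw [integral_indicator_const (1 : ℝ) (measurableSet_singleton true), measureReal_def,
      smul_eq_mul, mul_one, P₀_true_toReal]
  have h' : (π[(((univ : Set Bool) ×ˢ ({true} : Set Bool)).indicator fun _ => (1 : ℝ)) |
      (⊤ : MeasurableSpace Bool).prod (⊥ : MeasurableSpace Bool)])
      =ᵐ[π] fun _ => (1 / 2 : ℝ) := by
    filter_upwards [h] with p hp
    exact hp.trans (congrFun hrhs p)
  have hmass := @mass_half_fst π hprob hfst h'
  have hc : ∫ p, ∑ t ∈ Finset.Icc 1 3, ‖(N₀.clairvoyant 2).ξ t p.1 - N₀.ξ t p.2‖ ∂π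
      = (π offD).toReal := cost_eq π
  exact (hc.trans hmass).ge

lemma dist_NC_pos : 0 < NestedDistribution.dist N₀ (N₀.clairvoyant 2) := by
  unfold NestedDistribution.dist
  refine lt_of_lt_of_le (show (0 : ℝ) < 1 / 2 by norm_num) (le_csInf ?_ ?_)
  · exact ⟨_, πp, bicausal_prod_NC, rfl⟩
  rintro r ⟨π, ⟨hprob, hfst, hsnd, hc1, hc2⟩, rfl⟩
  haveI : IsProbabilityMeasure π := hprob
  have h := hc1 2 (by norm_num) (by norm_num) {true} MeasurableSpace.measurableSet_top
  have hrhs : (fun p : Bool × Bool =>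
      (P₀[(({true} : Set Bool).indicator fun _ => (1 : ℝ)) | (⊥ : MeasurableSpace Bool)]) p.1)
      = fun _ => (1 / 2 : ℝ) := by
    rw [condExp_bot]
    funext p
    rw [integral_indicator_const (1 : ℝ) (measurableSet_singleton true), measureReal_def,
      smul_eq_mul, mul_one, P₀_true_toReal]
  have h' : (π[((({true} : Set Bool) ×ˢ (univ : Set Bool)).indicator fun _ => (1 : ℝ)) |
      (⊥ : MeasurableSpace Bool).prod (⊤ : MeasurableSpace Bool)])
      =ᵐ[π] fun _ => (1 / 2 : ℝ) := by
    filter_upwards [h] with p hp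
    exact hp.trans (congrFun hrhs p)
  have hmass := @mass_half_snd π hprob hsnd h'
  have hc : ∫ p, ∑ t ∈ Finset.Icc 1 3, ‖N₀.ξ t p.1 - (N₀.clairvoyant 2).ξ t p.2‖ ∂π
      = (π offD).toReal := cost_eq π
  exact (hc.trans hmass).ge

end Construction

end ClairvoyantCE

open NestedDistribution in
/-- (Counterexample.) There is a nested distribution `P` of depth `T = 3` on a finite
probability space (a finite scenario tree) with `dl(P_{c(2)}, P) > 0 = dl(P, P)`.
Hence making only one of the two nested distributions clairvoyant yields neither a lower
nor an upper bound for the nested distance: with `P̃ = P` the inequality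
`dl(P_{c(2)}, P̃) ≤ dl(P, P̃)` fails, and with `P̃ = P_{c(2)}` the inequality
`dl(P, P̃) ≤ dl(P_{c(2)}, P̃)` fails, since `dl(P_{c(2)}, P_{c(2)}) = 0 < dl(P, P_{c(2)})`. -/
theorem exists_one_sided_clairvoyant_counterexample :
    ∃ (D : ℕ) (N : NestedDistribution 3 D), Finite N.Ω ∧
      NestedDistribution.dist N N = 0 ∧
      0 < NestedDistribution.dist (N.clairvoyant 2) N ∧
      ¬ (NestedDistribution.dist (N.clairvoyant 2) N ≤ NestedDistribution.dist N N) ∧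
      NestedDistribution.dist (N.clairvoyant 2) (N.clairvoyant 2) = 0 ∧
      0 < NestedDistribution.dist N (N.clairvoyant 2) ∧
      ¬ (NestedDistribution.dist N (N.clairvoyant 2) ≤
          NestedDistribution.dist (N.clairvoyant 2) (N.clairvoyant 2)) := by
  refine ⟨1, ClairvoyantCE.N₀, inferInstanceAs (Finite Bool), ClairvoyantCE.dist_NN,
    ClairvoyantCE.dist_CN_pos, ?_, ClairvoyantCE.dist_CC, ClairvoyantCE.dist_NC_pos, ?_⟩
  · rw [ClairvoyantCE.dist_NN]
    exact not_le.mpr ClairvoyantCE.dist_CN_pos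
  · rw [ClairvoyantCE.dist_CC]
    exact not_le.mpr ClairvoyantCE.dist_NC_pos

end
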